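/- arXiv:1403.5079 — 5 statements merged into one kernel-verified Lean document; each statement's English description precedes it below -/
import Mathlib

section
/- If [w] is a Lie monomial lying in the second derived subalgebra [L',L'] of the free Lie ring L, then all partial right derivatives ∂'_i[w], after applying the abelianization map φ' : U(L) → Z[x_1,...,x_n], vanish; hence the partial derivatives ∂_i : M → Z[x_1,...,x_n] on the free metabelian Lie ring M = L/[L',L'] are well-defined. -/
/-!
Write `∂ᵢ` for the left Fox derivative of the free algebra, so that `a = ε a + ∑ xᵢ ∂ᵢ a` with
`ε = algebraMapInv` the augmentation; it obeys the twisted Leibniz rule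
`∂ᵢ (a b) = ε a ∂ᵢ b + ∂ᵢ a b`. Both `ε` and `φ'` are maps to commutative rings, so they kill
the image of `L'`. For `u, v ∈ L'` the rule then gives
`φ' (∂ᵢ [u, v]) = φ' (∂ᵢ u) φ' v - φ' (∂ᵢ v) φ' u = 0`, and `[L', L']` is spanned by such
brackets.
-/

attribute [local instance] LieRing.ofAssociativeRing

/-- The natural embedding `ω : L → U(L)` of the free Lie ring on `x₁,…,xₙ` into its
universal enveloping algebra, identified with the free associative algebra. -/
noncomputable def ω (n : ℕ) : FreeLieAlgebra ℤ (Fin n) →ₗ⁅ℤ⁆ FreeAlgebra ℤ (Fin n) :=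
  FreeLieAlgebra.lift ℤ (FreeAlgebra.ι ℤ)

/-- The natural homomorphism `φ' : U(L) → ℤ[x₁,…,xₙ]` to the commutative polynomial
ring, sending each generator to the corresponding commuting variable. -/
noncomputable def φ' (n : ℕ) : FreeAlgebra ℤ (Fin n) →ₐ[ℤ] MvPolynomial (Fin n) ℤ :=
  FreeAlgebra.lift ℤ (fun i => MvPolynomial.X i)

theorem LieHom.map_eq_zero_of_mem_derivedSeries_one {R L A : Type*} [CommRing R] [LieRing L]
    [LieAlgebra R L] [CommRing A] [Algebra R A] (f : L →ₗ⁅R⁆ A) {u : L}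
    (hu : u ∈ LieAlgebra.derivedSeries R L 1) : f u = 0 := by
  have : IsLieAbelian A := isMulCommutative_iff_isLieAbelian.mp inferInstance
  have h := LieIdeal.derivedSeries_map_le (f := f) 1 (LieIdeal.mem_map hu)
  rwa [LieAlgebra.derivedSeries_def, LieAlgebra.derivedSeriesOfIdeal_succ,
    LieAlgebra.derivedSeriesOfIdeal_zero, LieSubmodule.trivial_lie_oper_zero,
    LieSubmodule.mem_bot] at h

namespace FreeAlgebra

section Semiring

variable {R X : Type*} [CommSemiring R] [DecidableEq X]

/-- The twisted Leibniz rule says that `a ↦ !![ε a, ∂ᵢ a; 0, a]` is multiplicative, so `∂ᵢ` is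
read off from the algebra map sending `xⱼ` to `!![0, δᵢⱼ; 0, xⱼ]`. -/
noncomputable def foxDerivMatrix (i : X) :
    FreeAlgebra R X →ₐ[R] Matrix (Fin 2) (Fin 2) (FreeAlgebra R X) :=
  lift R fun j => !![0, if j = i then 1 else 0; 0, ι R j]

theorem foxDerivMatrix_ι (i j : X) :
    foxDerivMatrix (R := R) i (ι R j) = !![0, if j = i then 1 else 0; 0, ι R j] :=
  lift_ι_apply _ _

theorem exists_foxDerivMatrix_eq (i : X) (a : FreeAlgebra R X) :
    ∃ p, foxDerivMatrix i a = !![algebraMap R _ (algebraMapInv a), p; 0, a] := by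
  induction a using FreeAlgebra.induction with
  | grade0 r => exact ⟨0, by simp [Matrix.algebraMap_eq_diagonal, Matrix.diagonal_fin_two]⟩
  | grade1 j => exact ⟨if j = i then 1 else 0, by simp [foxDerivMatrix_ι, algebraMapInv]⟩
  | mul a b ha hb =>
    obtain ⟨p, hp⟩ := ha
    obtain ⟨q, hq⟩ := hb
    refine ⟨algebraMap R _ (algebraMapInv a) * q + p * b, ?_⟩
    rw [map_mul, hp, hq, Matrix.mul_fin_two]
    simp
  | add a b ha hb =>
    obtain ⟨p, hp⟩ := ha
    obtain ⟨q, hq⟩ := hb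
    refine ⟨p + q, ?_⟩
    rw [map_add, hp, hq, Matrix.of_add_of]
    simp

noncomputable def foxDeriv (i : X) : FreeAlgebra R X →ₗ[R] FreeAlgebra R X :=
  Matrix.entryLinearMap R _ 0 1 ∘ₗ (foxDerivMatrix i).toLinearMap

theorem foxDerivMatrix_eq (i : X) (a : FreeAlgebra R X) :
    foxDerivMatrix i a = !![algebraMap R _ (algebraMapInv a), foxDeriv i a; 0, a] := by
  obtain ⟨p, hp⟩ := exists_foxDerivMatrix_eq i a
  have : foxDeriv i a = p := by simp [foxDeriv, hp]
  rwa [this]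

theorem foxDeriv_mul (i : X) (a b : FreeAlgebra R X) :
    foxDeriv i (a * b) = algebraMapInv a • foxDeriv i b + foxDeriv i a * b := by
  have h := congr_fun₂ (foxDerivMatrix_eq (R := R) i (a * b)) 0 1
  rw [map_mul, foxDerivMatrix_eq, foxDerivMatrix_eq, Matrix.mul_fin_two] at h
  simpa [Algebra.smul_def] using h.symm

theorem foxDeriv_ι_mul (i j : X) (b : FreeAlgebra R X) :
    foxDeriv i (ι R j * b) = if j = i then b else 0 := by
  have h := congr_fun₂ (foxDerivMatrix_eq (R := R) i (ι R j * b)) 0 1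
  rw [map_mul, foxDerivMatrix_ι, foxDerivMatrix_eq i b, Matrix.mul_fin_two] at h
  simpa using h.symm

end Semiring

variable {R X : Type*} [CommRing R] [DecidableEq X]

theorem map_foxDeriv_lie_eq_zero {B : Type*} [CommRing B] [Algebra R B]
    (f : FreeAlgebra R X →ₐ[R] B) (i : X) {a b : FreeAlgebra R X}
    (ha : f a = 0) (hb : f b = 0) (ha₀ : algebraMapInv a = 0) (hb₀ : algebraMapInv b = 0) :
    f (foxDeriv i ⁅a, b⁆) = 0 := by
  simp [Ring.lie_def, foxDeriv_mul, ha, hb, ha₀, hb₀]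

theorem map_foxDeriv_eq_zero_of_mem_derivedSeries_two {L B : Type*} [LieRing L] [LieAlgebra R L]
    [CommRing B] [Algebra R B] (g : L →ₗ⁅R⁆ FreeAlgebra R X) (f : FreeAlgebra R X →ₐ[R] B)
    (i : X) {w : L} (hw : w ∈ LieAlgebra.derivedSeries R L 2) :
    f (foxDeriv i (g w)) = 0 := by
  let D₁ := LieAlgebra.derivedSeries R L 1
  have hD₂ : LieAlgebra.derivedSeries R L 2 = ⁅D₁, D₁⁆ := LieAlgebra.derivedSeriesOfIdeal_succ ..
  suffices (⁅D₁, D₁⁆ : LieIdeal R L).toSubmodule ≤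
      LinearMap.ker (f.toLinearMap ∘ₗ foxDeriv i ∘ₗ g.toLinearMap) from this (hD₂ ▸ hw)
  rw [LieSubmodule.lieIdeal_oper_eq_linear_span', Submodule.span_le]
  rintro _ ⟨u, hu, v, hv, rfl⟩
  have vanish (y : L) (hy : y ∈ D₁) : f (g y) = 0 ∧ algebraMapInv (g y) = 0 :=
    ⟨(f.toLieHom.comp g).map_eq_zero_of_mem_derivedSeries_one hy,
      (algebraMapInv.toLieHom.comp g).map_eq_zero_of_mem_derivedSeries_one hy⟩
  simpa [LieHom.map_lie] using map_foxDeriv_lie_eq_zero f i (vanish u hu).1 (vanish v hv).1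
    (vanish u hu).2 (vanish v hv).2

end FreeAlgebra

/-- If `w` lies in the second derived subalgebra `[L',L']` of the free
Lie ring `L`, then all its partial right derivatives vanish after applying the
abelianization map `φ' : U(L) → ℤ[x₁,…,xₙ]`; hence the partial derivatives on the free
metabelian Lie ring `M = L/[L',L']` are well-defined. -/
theorem derivatives_vanish_on_second_derived (n : ℕ) (w : FreeLieAlgebra ℤ (Fin n))
    (hw : w ∈ LieAlgebra.derivedSeries ℤ (FreeLieAlgebra ℤ (Fin n)) 2)
    (d : Fin n → FreeAlgebra ℤ (Fin n))
    (hd : ω n w = ∑ i, FreeAlgebra.ι ℤ i * d i) :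
    ∀ i, φ' n (d i) = 0 := by
  intro i
  have hdi : FreeAlgebra.foxDeriv i (ω n w) = d i := by
    simp [hd, FreeAlgebra.foxDeriv_ι_mul]
  exact hdi ▸ FreeAlgebra.map_foxDeriv_eq_zero_of_mem_derivedSeries_two (ω n) (φ' n) i hw
end

section
/- Chain rule for endomorphisms of the free metabelian Lie ring: if μ_1, μ_2 are endomorphisms of M with μ_j(x_i) = y_{j,i}, and z_j = y_{1,j}(y_{2,1},...,y_{2,n}), then the Jacobi matrices satisfy J(z_1,...,z_n) = J(y_{2,1},...,y_{2,n}) · J_{ȳ_{2,1},...,ȳ_{2,n}}(y_{1,1},...,y_{1,n}), where the second factor is the Jacobi matrix of (y_{1,1},...,y_{1,n}) with the linear parts ȳ_{2,i} substituted for the variables. -/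
attribute [local instance 100] LieRing.ofAssociativeRing

/-!
The Lie embedding `ω` intertwines the endomorphism of the free Lie ring given by `y₂` with the
endomorphism `A` of the free associative algebra sending `xₗ` to `ω y_{2,l}`. Applying `A` to
`ω y_{1,j} = ∑ᵢ xᵢ d_{1,ji}` and expanding `A xᵢ = ∑ₘ xₘ d_{2,im}` yields a decomposition of
`ω z_j`. After abelianization the coefficients of such a decomposition are uniquely determined
(they can be read off a 2×2 matrix representation), and abelianization turns `A` into the
substitution of the linear parts `ȳ_{2,l}`.
-/

open MvPolynomial

namespace FreeAlgebra

variable {R : Type*} [CommSemiring R] {σ : Type*}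

lemma lift_X_lift (g : σ → FreeAlgebra R σ) (a : FreeAlgebra R σ) :
    lift R (X (R := R)) (lift R g a) =
      aeval (fun l => lift R (X (R := R)) (g l)) (lift R (X (R := R)) a) := by
  rw [← AlgHom.comp_apply, ← AlgHom.comp_apply]
  congr 1
  ext i
  simp

lemma lift_sum_ι_mul [Fintype σ] (g : σ → FreeAlgebra R σ) (e : σ → σ → FreeAlgebra R σ)
    (hg : ∀ i, g i = ∑ m, ι R m * e i m) (d : σ → FreeAlgebra R σ) :
    lift R g (∑ i, ι R i * d i) = ∑ m, ι R m * ∑ i, e i m * lift R g (d i) := by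
  simp only [map_sum, map_mul, lift_ι_apply, hg, Finset.sum_mul, Finset.mul_sum, mul_assoc]
  exact Finset.sum_comm

variable [DecidableEq σ]

/-- `foxMatrix k a = !![ε a, ∂ₖ a; 0, ā]` with `∂ₖ` the abelianized left Fox derivative; it is
multiplicative by the Leibniz rule `∂ₖ (a * b) = ∂ₖ a * b̄ + ε a * ∂ₖ b`. -/
noncomputable def foxMatrix (k : σ) :
    FreeAlgebra R σ →ₐ[R] Matrix (Fin 2) (Fin 2) (MvPolynomial σ R) :=
  lift R fun i => !![0, if i = k then 1 else 0; 0, X i]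

lemma foxMatrix_apply_one (k : σ) (a : FreeAlgebra R σ) :
    foxMatrix k a 1 0 = 0 ∧ foxMatrix k a 1 1 = lift R (X (R := R)) a := by
  induction a with
  | grade0 r => simp [Algebra.algebraMap_eq_smul_one]
  | grade1 x => simp [foxMatrix]
  | mul a b ha hb => simp [Matrix.mul_apply, ha.1, ha.2, hb.1, hb.2]
  | add a b ha hb => simp [ha.1, ha.2, hb.1, hb.2]

lemma foxMatrix_ι_mul_apply_zero_one (k i : σ) (a : FreeAlgebra R σ) :
    foxMatrix k (ι R i * a) 0 1 = if i = k then lift R (X (R := R)) a else 0 := by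
  rw [map_mul, Matrix.mul_apply, Fin.sum_univ_two, (foxMatrix_apply_one k a).2]
  simp [foxMatrix]

lemma foxMatrix_sum_ι_mul_apply_zero_one [Fintype σ] (d : σ → FreeAlgebra R σ) (k : σ) :
    foxMatrix k (∑ i, ι R i * d i) 0 1 = lift R (X (R := R)) (d k) := by
  simp only [map_sum, Matrix.sum_apply, foxMatrix_ι_mul_apply_zero_one]
  simp

lemma lift_X_eq_of_sum_ι_mul_eq [Fintype σ] {d d' : σ → FreeAlgebra R σ}
    (h : ∑ i, ι R i * d i = ∑ i, ι R i * d' i) (k : σ) :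
    lift R (X (R := R)) (d k) = lift R (X (R := R)) (d' k) := by
  rw [← foxMatrix_sum_ι_mul_apply_zero_one, h, foxMatrix_sum_ι_mul_apply_zero_one]

end FreeAlgebra

lemma FreeLieAlgebra.lift_ι_lift {R : Type*} [CommRing R] {X : Type*}
    (f : X → FreeLieAlgebra R X) (v : FreeLieAlgebra R X) :
    lift R (FreeAlgebra.ι R) (lift R f v) =
      FreeAlgebra.lift R (fun i => lift R (FreeAlgebra.ι R) (f i))
        (lift R (FreeAlgebra.ι R) v) := by
  rw [← LieHom.comp_apply, ← AlgHom.toLieHom_apply, ← LieHom.comp_apply]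
  congr 1
  ext i
  simp

lemma ω_lift {n : ℕ} (y : Fin n → FreeLieAlgebra ℤ (Fin n)) (v : FreeLieAlgebra ℤ (Fin n)) :
    ω n (FreeLieAlgebra.lift ℤ y v) = FreeAlgebra.lift ℤ (fun l => ω n (y l)) (ω n v) :=
  FreeLieAlgebra.lift_ι_lift y v

/-- **chain rule.** If endomorphisms `μ₁, μ₂` of the free metabelian Lie
ring are given by Lie polynomials `y_{1,i}, y_{2,i}` and `z_j = y_{1,j}(y_{2,1},…,y_{2,n})`,
then `J(z₁,…,zₙ) = J(y_{2,1},…,y_{2,n}) · J_{ȳ₂}(y_{1,1},…,y_{1,n})`, where in the second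
factor the linear parts `ȳ_{2,i}` (i.e. the abelianizations `φ'(ω y_{2,i})`) are
substituted for the variables.  The Jacobi matrices are `J(g₁,…,gₙ) = (∂ᵢ g_j)` with
`∂ᵢ g = φ'(∂'ᵢ g)` given by the decompositions `ω g = ∑ᵢ xᵢ·∂'ᵢ g`. -/
theorem chain_rule_jacobi (n : ℕ) (y₁ y₂ : Fin n → FreeLieAlgebra ℤ (Fin n))
    (z : Fin n → FreeLieAlgebra ℤ (Fin n))
    (hz : ∀ j, z j = (FreeLieAlgebra.lift ℤ y₂) (y₁ j))
    (dz d₁ d₂ : Fin n → Fin n → FreeAlgebra ℤ (Fin n))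
    (hdz : ∀ j, ω n (z j) = ∑ i, FreeAlgebra.ι ℤ i * dz j i)
    (hd₁ : ∀ j, ω n (y₁ j) = ∑ i, FreeAlgebra.ι ℤ i * d₁ j i)
    (hd₂ : ∀ j, ω n (y₂ j) = ∑ i, FreeAlgebra.ι ℤ i * d₂ j i) :
    (Matrix.of fun i j => φ' n (dz j i)) =
      (Matrix.of fun i j => φ' n (d₂ j i)) *
        (Matrix.of fun i j =>
          MvPolynomial.aeval (fun l => φ' n (ω n (y₂ l))) (φ' n (d₁ j i))) := by
  refine Matrix.ext fun k j => ?_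
  have hω : ∑ m, FreeAlgebra.ι ℤ m * dz j m =
      ∑ m, FreeAlgebra.ι ℤ m *
        ∑ i, d₂ i m * FreeAlgebra.lift ℤ (fun l => ω n (y₂ l)) (d₁ j i) := by
    rw [← hdz, hz, ω_lift, hd₁]
    exact FreeAlgebra.lift_sum_ι_mul _ d₂ hd₂ _
  simp only [Matrix.mul_apply, Matrix.of_apply, φ', FreeAlgebra.lift_X_eq_of_sum_ι_mul_eq hω,
    map_sum, map_mul, FreeAlgebra.lift_X_lift]
end

section
/- If μ : M → M is an automorphism of the free metabelian Lie ring M with μ(x_i) = g_i, then the Jacobi matrix J(g_1,...,g_n) = (∂_i g_j) is invertible in the ring of n×n matrices over Z[x_1,...,x_n]. -/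
attribute [local instance 100] LieRing.ofAssociativeRing

/-- The free metabelian Lie ring `M` on `x₁,…,xₙ`: the quotient of the free Lie ring by
the second derived ideal `[L',L']`. -/
abbrev M (n : ℕ) :=
  FreeLieAlgebra ℤ (Fin n) ⧸ LieAlgebra.derivedSeries ℤ (FreeLieAlgebra ℤ (Fin n)) 2

/-- The natural projection `L → M`. -/
noncomputable def mkM (n : ℕ) : FreeLieAlgebra ℤ (Fin n) → M n := LieSubmodule.Quotient.mk

/-- `D` is the system of partial derivatives `∂ᵢ : M → ℤ[x₁,…,xₙ]` of the free metabelian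
Lie ring: for any lift `w ∈ L` of an element of `M` with right derivatives `d`
(i.e. `ω w = ∑ᵢ xᵢ·dᵢ` in `U(L)`), `D` is given by abelianizing the `dᵢ`. -/
def IsDeriv (n : ℕ) (D : M n → Fin n → MvPolynomial (Fin n) ℤ) : Prop :=
  ∀ (w : FreeLieAlgebra ℤ (Fin n)) (d : Fin n → FreeAlgebra ℤ (Fin n)),
    ω n w = ∑ i, FreeAlgebra.ι ℤ i * d i → D (mkM n w) = fun i => φ' n (d i)

/-!
Every element of the augmentation ideal of the free associative algebra `U(L)` can be written
as `∑ xᵢ dᵢ`, so `∂` is determined on all of `M`, and it obeys a chain rule: for an endomorphism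
`f` of `L` and elements `vₖ`, `J(f v) = J(f x) · ρ(J(v))`, where `ρ` substitutes for `xᵢ` the
abelianization of `f(xᵢ)`. Taking for `f` a lift of `μ` and for `vₖ` lifts of `μ⁻¹(xₖ)` gives
`J(g) · ρ(J(v)) = J(x) = 1`, and a one-sided inverse of a square matrix over a commutative ring
is two-sided.
-/

namespace FreeAlgebra

variable {R X : Type*} [CommRing R] [Fintype X]

theorem exists_eq_algebraMap_add_sum_ι_mul (a : FreeAlgebra R X) :
    ∃ (c : R) (d : X → FreeAlgebra R X), a = algebraMap R _ c + ∑ i, ι R i * d i := by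
  classical
  induction a with
  | grade0 r => exact ⟨r, 0, by simp⟩
  | grade1 x => exact ⟨0, Pi.single x 1, by simp [Pi.single_apply, mul_ite]⟩
  | mul a b ha hb =>
    obtain ⟨c, d, rfl⟩ := ha
    obtain ⟨c', d', hb⟩ := hb
    refine ⟨c * c', fun i => d i * b + c • d' i, ?_⟩
    calc (algebraMap R _ c + ∑ i, ι R i * d i) * b
        = c • b + ∑ i, ι R i * (d i * b) := by
          simp only [add_mul, Finset.sum_mul, mul_assoc, Algebra.smul_def]
      _ = _ := by
          nth_rewrite 1 [hb]
          simp only [smul_add, Finset.smul_sum, mul_add, Finset.sum_add_distrib, map_mul,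
            Algebra.mul_smul_comm, ← Algebra.smul_def]
          abel
  | add a b ha hb =>
    obtain ⟨c, d, rfl⟩ := ha
    obtain ⟨c', d', rfl⟩ := hb
    refine ⟨c + c', d + d', ?_⟩
    simp only [map_add, Pi.add_apply, mul_add, Finset.sum_add_distrib]
    abel

theorem exists_eq_sum_ι_mul_of_algebraMapInv_eq_zero {a : FreeAlgebra R X}
    (ha : algebraMapInv a = 0) : ∃ d : X → FreeAlgebra R X, a = ∑ i, ι R i * d i := by
  obtain ⟨c, d, rfl⟩ := exists_eq_algebraMap_add_sum_ι_mul a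
  have hc : c = 0 := by simpa [algebraMapInv] using ha
  exact ⟨d, by simp [hc]⟩

theorem map_sum_ι_mul {Y : Type*} [Fintype Y] (F : FreeAlgebra R X →ₐ[R] FreeAlgebra R Y)
    {e : X → Y → FreeAlgebra R Y} (hF : ∀ i, F (ι R i) = ∑ j, ι R j * e i j)
    (d : X → FreeAlgebra R X) :
    F (∑ i, ι R i * d i) = ∑ j, ι R j * ∑ i, e i j * F (d i) := by
  simp only [map_sum, map_mul, hF, Finset.sum_mul, Finset.mul_sum, mul_assoc]
  exact Finset.sum_comm

end FreeAlgebra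

namespace FreeLieAlgebra

variable {R X : Type*} [CommRing R]

theorem algebraMapInv_lift_ι (v : FreeLieAlgebra R X) :
    FreeAlgebra.algebraMapInv (lift R (FreeAlgebra.ι R) v) = 0 := by
  have h : FreeAlgebra.algebraMapInv.toLieHom.comp (lift R (FreeAlgebra.ι R)) =
      (0 : FreeLieAlgebra R X →ₗ⁅R⁆ R) := by
    ext x
    simp [FreeAlgebra.algebraMapInv]
  exact LieHom.congr_fun h v

theorem freeAlgebraLift_lift_ι {Y : Type*} (f : FreeLieAlgebra R X →ₗ⁅R⁆ FreeLieAlgebra R Y)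
    (v : FreeLieAlgebra R X) :
    FreeAlgebra.lift R (fun x => lift R (FreeAlgebra.ι R) (f (of R x)))
      (lift R (FreeAlgebra.ι R) v) = lift R (FreeAlgebra.ι R) (f v) := by
  have h : (FreeAlgebra.lift R fun x => lift R (FreeAlgebra.ι R) (f (of R x))).toLieHom.comp
      (lift R (FreeAlgebra.ι R)) = (lift R (FreeAlgebra.ι R)).comp f := by
    ext x
    simp
  exact LieHom.congr_fun h v

end FreeLieAlgebra

open FreeAlgebra (ι)
open FreeLieAlgebra (of)

theorem mkM_surjective (n : ℕ) : Function.Surjective (mkM n) :=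
  Submodule.Quotient.mk_surjective _

noncomputable def mkMLieHom (n : ℕ) : FreeLieAlgebra ℤ (Fin n) →ₗ⁅ℤ⁆ M n :=
  { (LieSubmodule.Quotient.mk' _).toLinearMap with
    map_lie' := (LieSubmodule.Quotient.mk_bracket _ _ _).symm }

section Jacobian

variable {n : ℕ}

theorem exists_ω_eq_sum_ι_mul (v : FreeLieAlgebra ℤ (Fin n)) :
    ∃ d : Fin n → FreeAlgebra ℤ (Fin n), ω n v = ∑ i, ι ℤ i * d i :=
  FreeAlgebra.exists_eq_sum_ι_mul_of_algebraMapInv_eq_zero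
    (FreeLieAlgebra.algebraMapInv_lift_ι v)

theorem mkM_map_eq (μ : M n →ₗ⁅ℤ⁆ M n)
    {f : FreeLieAlgebra ℤ (Fin n) →ₗ⁅ℤ⁆ FreeLieAlgebra ℤ (Fin n)}
    (hf : ∀ i, mkM n (f (of ℤ i)) = μ (mkM n (of ℤ i))) (v : FreeLieAlgebra ℤ (Fin n)) :
    mkM n (f v) = μ (mkM n v) := by
  have h : (mkMLieHom n).comp f = μ.comp (mkMLieHom n) := FreeLieAlgebra.hom_ext hf
  exact LieHom.congr_fun h v

def jacobian (D : M n → Fin n → MvPolynomial (Fin n) ℤ) (g : Fin n → M n) :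
    Matrix (Fin n) (Fin n) (MvPolynomial (Fin n) ℤ) :=
  Matrix.of fun i j => D (g j) i

variable {D : M n → Fin n → MvPolynomial (Fin n) ℤ}

theorem IsDeriv.jacobian_mkM_of (hD : IsDeriv n D) :
    jacobian D (fun k => mkM n (of ℤ k)) = 1 := by
  ext i k
  have h : ω n (of ℤ k) = ∑ i, ι ℤ i * (Pi.single k 1 : Fin n → FreeAlgebra ℤ (Fin n)) i := by
    rw [show ω n (of ℤ k) = ι ℤ k from FreeLieAlgebra.lift_of_apply _ _]
    simp [Pi.single_apply, mul_ite]
  simp [jacobian, hD _ _ h, Pi.single_apply, Matrix.one_apply]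

theorem IsDeriv.apply_mkM_map (hD : IsDeriv n D)
    (f : FreeLieAlgebra ℤ (Fin n) →ₗ⁅ℤ⁆ FreeLieAlgebra ℤ (Fin n))
    (v : FreeLieAlgebra ℤ (Fin n)) (j : Fin n) :
    D (mkM n (f v)) j = ∑ i, D (mkM n (f (of ℤ i))) j *
      MvPolynomial.aeval (fun i => φ' n (ω n (f (of ℤ i)))) (D (mkM n v) i) := by
  obtain ⟨d, hd⟩ := exists_ω_eq_sum_ι_mul v
  choose e he using fun i => exists_ω_eq_sum_ι_mul (f (of ℤ i))
  set F := FreeAlgebra.lift ℤ fun i => ω n (f (of ℤ i))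
  have hF : ω n (f v) = ∑ j, ι ℤ j * ∑ i, e i j * F (d i) := calc
    ω n (f v) = F (ω n v) := (FreeLieAlgebra.freeAlgebraLift_lift_ι f v).symm
    _ = _ := by
      rw [hd]
      exact FreeAlgebra.map_sum_ι_mul F (fun i => (FreeAlgebra.lift_ι_apply _ _).trans (he i)) d
  have hφF : ∀ a, φ' n (F a) =
      MvPolynomial.aeval (fun i => φ' n (ω n (f (of ℤ i)))) (φ' n a) := by
    refine AlgHom.congr_fun (FreeAlgebra.hom_ext ?_ : (φ' n).comp F =
      (MvPolynomial.aeval fun i => φ' n (ω n (f (of ℤ i)))).comp (φ' n))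
    ext i
    simp [F, φ']
  simp only [hD _ _ hF, hD _ _ hd, hD _ _ (he _), map_sum, map_mul, hφF]

theorem IsDeriv.jacobian_mkM_map (hD : IsDeriv n D)
    (f : FreeLieAlgebra ℤ (Fin n) →ₗ⁅ℤ⁆ FreeLieAlgebra ℤ (Fin n))
    (v : Fin n → FreeLieAlgebra ℤ (Fin n)) :
    jacobian D (fun k => mkM n (f (v k))) = jacobian D (fun i => mkM n (f (of ℤ i))) *
      (jacobian D fun k => mkM n (v k)).map
        (MvPolynomial.aeval fun i => φ' n (ω n (f (of ℤ i)))) :=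
  Matrix.ext fun j k => hD.apply_mkM_map f (v k) j

end Jacobian

/-- If `μ : M → M` is an automorphism of the free metabelian Lie ring
with `μ(xᵢ) = gᵢ`, then the Jacobi matrix `J(g₁,…,gₙ) = (∂ᵢ g_j)` is invertible in the
ring of `n × n` matrices over `ℤ[x₁,…,xₙ]`. -/
theorem jacobi_of_automorphism_isUnit (n : ℕ)
    (D : M n → Fin n → MvPolynomial (Fin n) ℤ) (hD : IsDeriv n D)
    (μ : M n ≃ₗ⁅ℤ⁆ M n) (g : Fin n → M n)
    (hg : ∀ i, g i = μ (mkM n (FreeLieAlgebra.of ℤ i))) :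
    IsUnit (Matrix.of fun i j => D (g j) i) := by
  choose w hw using fun i => mkM_surjective n (g i)
  choose v hv using fun k => mkM_surjective n (μ.symm (mkM n (of ℤ k)))
  let f : FreeLieAlgebra ℤ (Fin n) →ₗ⁅ℤ⁆ FreeLieAlgebra ℤ (Fin n) := FreeLieAlgebra.lift ℤ w
  have hf_of (i : Fin n) : mkM n (f (of ℤ i)) = g i := by
    rw [← hw i]
    exact congrArg _ (FreeLieAlgebra.lift_of_apply _ _)
  have hf_inv (k : Fin n) : mkM n (f (v k)) = mkM n (of ℤ k) := by
    rw [mkM_map_eq μ.toLieHom (fun i => (hf_of i).trans (hg i)), hv]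
    exact μ.apply_symm_apply _
  have jacobian_eq := hD.jacobian_mkM_map f v
  simp only [hf_of, hf_inv, hD.jacobian_mkM_of] at jacobian_eq
  exact IsUnit.of_mul_eq_one _ jacobian_eq.symm
end

section
/- For any nontrivial finitely generated commutative ring quotient Z[x_1,...,x_n]/I, there exist positive integers p, q, m with m ≥ 2 and a surjective ring homomorphism θ : Z[X]/⟨m, x_i^p(x_i^q−1) : i⟩ → R onto a nontrivial finite quotient R of Z[X]/I, sending each x_i to its image in R. -/
/-!
Take a maximal ideal `J ⊇ I`. Since `ℤ` is a Jacobson ring, Zariski's lemma makes the residue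
field `R = ℤ[X]/J` a finitely generated abelian group, of nonzero characteristic `m` because `ℤ`
is not a field; so `R` is finite. If `R` has `k` elements, every `r ∈ R` satisfies
`r ^ (k + k!) = r ^ k`, hence `I_{k,k!,m} ⊆ J` and `θ` is the induced map on quotients.
-/

/-- The ideal `I_{p,q,m} = ⟨m, xᵢᵖ(xᵢ^q − 1)⟩` of `ℤ[x₁,…,xₙ]`. -/
noncomputable def Ipqm (n p q m : ℕ) : Ideal (MvPolynomial (Fin n) ℤ) :=
  Ideal.span ({(m : MvPolynomial (Fin n) ℤ)} ∪
    Set.range fun i : Fin n => MvPolynomial.X i ^ p * (MvPolynomial.X i ^ q - 1))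

open MvPolynomial

section Monoid

variable {M : Type*} [Monoid M]

theorem pow_add_mul_eq_pow_of_pow_add_eq {x : M} {a d b : ℕ} (h : x ^ (a + d) = x ^ a)
    (hb : a ≤ b) (c : ℕ) : x ^ (b + d * c) = x ^ b := by
  obtain ⟨e, rfl⟩ := Nat.exists_eq_add_of_le hb
  induction c with
  | zero => simp
  | succ c ih =>
    calc x ^ (a + e + d * (c + 1)) = x ^ (a + d) * x ^ (e + d * c) := by
          rw [← pow_add]; ring_nf
      _ = x ^ (a + e) := by rw [h, ← pow_add, ← add_assoc, ih]

/-- By pigeonhole two of `x ^ 0, …, x ^ k` coincide, so `x` has preperiod at most `k` and a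
period dividing `k!`, where `k = Nat.card M`. -/
theorem pow_card_add_factorial_eq_pow_card [Finite M] (x : M) :
    x ^ (Nat.card M + (Nat.card M).factorial) = x ^ Nat.card M := by
  have := Fintype.ofFinite M
  set k := Nat.card M
  have periodic {s t : ℕ} (hst : s < t) (htk : t ≤ k) (h : x ^ s = x ^ t) :
      x ^ (k + k.factorial) = x ^ k := by
    obtain ⟨c, hc⟩ := Nat.dvd_factorial (Nat.sub_pos_of_lt hst) ((t.sub_le s).trans htk)
    rw [hc]
    exact pow_add_mul_eq_pow_of_pow_add_eq (by rw [Nat.add_sub_cancel' hst.le, h])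
      (hst.le.trans htk) c
  obtain ⟨i, j, hij, h⟩ :=
    Fintype.exists_ne_map_eq_of_card_lt (fun i : Fin (k + 1) => x ^ (i : ℕ))
      (by simp [k, Nat.card_eq_fintype_card])
  rcases lt_or_gt_of_ne (Fin.val_injective.ne hij) with hlt | hlt
  · exact periodic hlt (Nat.lt_succ_iff.1 j.2) h
  · exact periodic hlt (Nat.lt_succ_iff.1 i.2) h.symm

end Monoid

theorem Int.jacobson_bot_eq_bot : (⊥ : Ideal ℤ).jacobson = ⊥ := by
  refine eq_bot_iff.2 fun x hx => ?_
  have hsq : x * x + 1 = 1 ∨ x * x + 1 = -1 := Int.isUnit_iff.1 (Ideal.mem_jacobson_bot.1 hx x)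
  have : x * x = 0 := by rcases hsq with h | h <;> nlinarith [mul_self_nonneg x]
  simpa using this

instance Int.isJacobsonRing : IsJacobsonRing ℤ :=
  isJacobsonRing_iff_prime_eq.2 fun {P} hP => by
    by_cases hP0 : P = ⊥
    · rw [hP0, Int.jacobson_bot_eq_bot]
    · have := IsPrime.to_maximal_ideal hP0
      exact Ideal.jacobson_eq_self_of_isMaximal

theorem ringChar_ne_zero_of_finiteType_int (K : Type*) [Field K] [Algebra.FiniteType ℤ K] :
    ringChar K ≠ 0 := by
  intro h0
  have : CharP K 0 := h0 ▸ ringChar.charP K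
  have := CharP.charP_to_charZero K
  have : Module.Finite ℤ K := finite_of_finite_type_of_isJacobsonRing ℤ K
  exact Int.not_isField ((Algebra.IsIntegral.isField_iff_isField
    (algebraMap ℤ K).injective_int).2 (Field.toIsField K))

theorem finite_of_finiteType_int (K : Type*) [Field K] [Algebra ℤ K] [Algebra.FiniteType ℤ K] :
    Finite K := by
  -- makes the `ℤ`-module structure of `K` the canonical one used by `Module.finite_of_fg_torsion`
  obtain rfl : ‹Algebra ℤ K› = Ring.toIntAlgebra K := Subsingleton.elim _ _
  have : Module.Finite ℤ K := finite_of_finite_type_of_isJacobsonRing ℤ K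
  have hchar : (ringChar K : ℤ) ≠ 0 := by exact_mod_cast ringChar_ne_zero_of_finiteType_int K
  refine Module.finite_of_fg_torsion K fun x =>
    ⟨⟨ringChar K, mem_nonZeroDivisors_of_ne_zero hchar⟩, ?_⟩
  simp [Submonoid.smul_def]

theorem Ideal.exists_le_isMaximal_finite_quotient {A : Type*} [CommRing A] [Algebra ℤ A]
    [Algebra.FiniteType ℤ A] {I : Ideal A} (hI : I ≠ ⊤) :
    ∃ J : Ideal A, I ≤ J ∧ J.IsMaximal ∧ Finite (A ⧸ J) := by
  obtain ⟨J, hJ, hIJ⟩ := I.exists_le_maximal hI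
  let := Ideal.Quotient.field J
  have : Algebra.FiniteType ℤ (A ⧸ J) :=
    .of_surjective (Ideal.Quotient.mkₐ ℤ J) (Ideal.Quotient.mkₐ_surjective ℤ J)
  exact ⟨J, hIJ, hJ, finite_of_finiteType_int (A ⧸ J)⟩

theorem Ipqm_le_ker {n p q m : ℕ} {S : Type*} [CommRing S] (f : MvPolynomial (Fin n) ℤ →+* S)
    (hm : (m : S) = 0) (hX : ∀ i, f (X i) ^ (p + q) = f (X i) ^ p) :
    Ipqm n p q m ≤ RingHom.ker f := by
  rw [Ipqm, Ideal.span_le]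
  rintro _ (rfl | ⟨i, rfl⟩)
  · simpa using hm
  · simp [mul_sub, ← pow_add, hX]

/-- For any nontrivial finitely generated quotient `ℤ[x₁,…,xₙ]/I`,
there are positive integers `p, q, m` with `m ≥ 2`, a nontrivial finite quotient
`R = ℤ[X]/J` of `ℤ[X]/I` (i.e. `I ≤ J`), and a surjective ring homomorphism
`θ : ℤ[X]/I_{p,q,m} → R` sending each `xᵢ` to its image in `R`. -/
theorem exists_finite_quotient_through_Ipqm (n : ℕ) (I : Ideal (MvPolynomial (Fin n) ℤ))
    (hI : Nontrivial (MvPolynomial (Fin n) ℤ ⧸ I)) :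
    ∃ (p q m : ℕ), 0 < p ∧ 0 < q ∧ 2 ≤ m ∧
      ∃ J : Ideal (MvPolynomial (Fin n) ℤ), I ≤ J ∧
        Nontrivial (MvPolynomial (Fin n) ℤ ⧸ J) ∧
        Finite (MvPolynomial (Fin n) ℤ ⧸ J) ∧
        ∃ θ : (MvPolynomial (Fin n) ℤ ⧸ Ipqm n p q m) →+*
              (MvPolynomial (Fin n) ℤ ⧸ J),
          Function.Surjective θ ∧
          ∀ f : MvPolynomial (Fin n) ℤ,
            θ (Ideal.Quotient.mk (Ipqm n p q m) f) = Ideal.Quotient.mk J f := by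
  obtain ⟨J, hIJ, hJ, hfin⟩ :=
    Ideal.exists_le_isMaximal_finite_quotient (Ideal.Quotient.nontrivial_iff.1 hI)
  set R := MvPolynomial (Fin n) ℤ ⧸ J
  set k := Nat.card R
  have hk : 0 < k := Nat.card_pos
  have hm : 2 ≤ ringChar R := by
    have := CharP.char_ne_zero_of_finite R (ringChar R)
    have := CharP.char_ne_one R (ringChar R)
    omega
  have hle : Ipqm n k k.factorial (ringChar R) ≤ J := by
    simpa using Ipqm_le_ker (Ideal.Quotient.mk J) ringChar.Nat.cast_ringChar
      fun i => pow_card_add_factorial_eq_pow_card _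
  exact ⟨k, k.factorial, ringChar R, hk, k.factorial_pos, hm, J, hIJ, inferInstance, hfin,
    Ideal.Quotient.factor hle, Ideal.Quotient.factor_surjective hle, Ideal.Quotient.factor_mk hle⟩
end

section
/- In the matrix Lie ring M_{p,q,m} of 2×2 matrices of the form [[l, 0],[τ, 0]] with l ∈ Z_{p,q,m}[X] and τ in a free rank-n Z_{p,q,m}[X]-module T, with bracket [S_1,S_2] = S_1S_2 − S_2S_1, the substitution formula holds: for any Lie polynomial g of the free metabelian Lie ring and matrices S_i = [[s_i,0],[τ_i,0]], one has g(S_1,...,S_n) = [[ḡ(s_1,...,s_n), 0],[Σ_{i=1}^n τ_i · ∂̄_i g(s_1,...,s_n), 0]], where ḡ is the linear part of g and ∂̄_i g are the reduced partial derivatives. -/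
open TrivSqZeroExt

set_option maxHeartbeats 1000000
set_option synthInstance.maxHeartbeats 400000

attribute [local instance 100] LieRing.ofAssociativeRing

/-- The finite quotient ring `ℤ_{p,q,m}[X]`. -/
abbrev Rpqm (n p q m : ℕ) := MvPolynomial (Fin n) ℤ ⧸ Ipqm n p q m

/-- Entries for the `2 × 2` matrices over `ℤ_{p,q,m}[X]`, packaging the scalar slot and
the free rank-`n` module slot `T_{p,q,m}` as a square-zero extension. -/
abbrev MatEntry (n p q m : ℕ) :=
  TrivSqZeroExt (Rpqm n p q m) (Fin n → Rpqm n p q m)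

/-- The matrix `Sᵢ = [[sᵢ, 0], [τᵢ, 0]]`. -/
noncomputable def Smat (n p q m : ℕ) (s : Fin n → Rpqm n p q m)
    (τ : Fin n → (Fin n → Rpqm n p q m)) (i : Fin n) :
    Matrix (Fin 2) (Fin 2) (MatEntry n p q m) :=
  Matrix.of ![![inl (s i), 0], ![inr (τ i), 0]]

/-! The Lie evaluation at `S` factors through `ω` followed by the associative evaluation `ψ`
at `S`, so `g(S) = ψ(∑ᵢ xᵢ dᵢ) = ∑ᵢ Sᵢ ψ(dᵢ)`. Matrices with vanishing `(0,1)` entry form a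
subring on which the `(0,0)` entry is multiplicative, so the first row of `ψ(dᵢ)` is
`[dᵢ(s), 0]`. Since the second column of `Sᵢ` vanishes, `Sᵢ ψ(dᵢ)` is determined by that row:
it is `[[sᵢ dᵢ(s), 0], [dᵢ(s) τᵢ, 0]]`, and `∑ᵢ sᵢ dᵢ(s) = ḡ(s)`. -/

section LowerColumn

variable {R M : Type*} [CommSemiring R] [AddCommMonoid M]

def lowerColumn (a : R) (v : M) : Matrix (Fin 2) (Fin 2) (TrivSqZeroExt R M) :=
  Matrix.of ![![inl a, 0], ![inr v, 0]]

theorem sum_lowerColumn {ι : Type*} (t : Finset ι) (a : ι → R) (v : ι → M) :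
    ∑ i ∈ t, lowerColumn (a i) (v i) = lowerColumn (∑ i ∈ t, a i) (∑ i ∈ t, v i) := by
  refine Matrix.ext fun j k => ?_
  fin_cases j <;> fin_cases k <;> simp [lowerColumn, Matrix.sum_apply, ← inl_sum, ← inr_sum]

variable [Module R M] [Module Rᵐᵒᵖ M] [IsCentralScalar R M]

theorem lowerColumn_mul {a b : R} {v : M} {X : Matrix (Fin 2) (Fin 2) (TrivSqZeroExt R M)}
    (h₀₀ : X 0 0 = inl b) (h₀₁ : X 0 1 = 0) :
    lowerColumn a v * X = lowerColumn (a * b) (b • v) := by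
  refine Matrix.ext fun j k => ?_
  fin_cases j <;> fin_cases k <;>
    simp [lowerColumn, Matrix.mul_apply, h₀₀, h₀₁, inr_mul_inl]

theorem freeAlgebra_lift_inl {S X : Type*} [CommSemiring S] [Algebra S R] [Module S M]
    [IsScalarTower S R M] [IsScalarTower S Rᵐᵒᵖ M] (s : X → R) (u : FreeAlgebra S X) :
    FreeAlgebra.lift S (fun i => (inl (s i) : TrivSqZeroExt R M)) u =
      inl (FreeAlgebra.lift S s u) := by
  suffices FreeAlgebra.lift S (fun i => (inl (s i) : TrivSqZeroExt R M)) =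
      (inlAlgHom S R M).comp (FreeAlgebra.lift S s) from DFunLike.congr_fun this u
  exact FreeAlgebra.hom_ext (funext fun i => by simp)

end LowerColumn

section FreeAlgebraLift

variable {R A X : Type*} [CommSemiring R] [Semiring A] [Algebra R A]
  {f : X → Matrix (Fin 2) (Fin 2) A}

theorem freeAlgebra_lift_apply_zero_one (hf : ∀ i, f i 0 1 = 0) (u : FreeAlgebra R X) :
    FreeAlgebra.lift R f u 0 1 = 0 := by
  induction u using FreeAlgebra.induction with
  | grade0 r => simp [Matrix.algebraMap_matrix_apply]
  | grade1 i => simpa using hf i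
  | mul a b ha hb => simp [Matrix.mul_apply, ha, hb]
  | add a b ha hb => simp [ha, hb]

theorem freeAlgebra_lift_apply_zero_zero (hf : ∀ i, f i 0 1 = 0) (u : FreeAlgebra R X) :
    FreeAlgebra.lift R f u 0 0 = FreeAlgebra.lift R (fun i => f i 0 0) u := by
  induction u using FreeAlgebra.induction with
  | grade0 r => simp [Matrix.algebraMap_matrix_apply]
  | grade1 i => simp
  | mul a b ha hb => simp [Matrix.mul_apply, ha, hb, freeAlgebra_lift_apply_zero_one hf]
  | add a b ha hb => simp [ha, hb]

end FreeAlgebraLift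

theorem freeLieAlgebra_lift_eq_freeAlgebra_lift {R X A : Type*} [CommRing R] [Ring A]
    [Algebra R A] (f : X → A) (g : FreeLieAlgebra R X) :
    FreeLieAlgebra.lift R f g =
      FreeAlgebra.lift R f (FreeLieAlgebra.lift R (FreeAlgebra.ι R) g) := by
  suffices FreeLieAlgebra.lift R f =
      (FreeAlgebra.lift R f).toLieHom.comp (FreeLieAlgebra.lift R (FreeAlgebra.ι R)) by
    rw [this]; rfl
  exact FreeLieAlgebra.hom_ext fun i => by simp

theorem eval₂Hom_φ' {n : ℕ} {R : Type*} [CommRing R] (s : Fin n → R)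
    (u : FreeAlgebra ℤ (Fin n)) :
    MvPolynomial.eval₂Hom (Int.castRingHom R) s (φ' n u) = FreeAlgebra.lift ℤ s u := by
  suffices (MvPolynomial.aeval s).comp (φ' n) = FreeAlgebra.lift ℤ s from
    DFunLike.congr_fun this u
  exact FreeAlgebra.hom_ext (funext fun i => by simp [φ'])

theorem substitution_formula_general (n p q m : ℕ)
    (s : Fin n → Rpqm n p q m) (τ : Fin n → (Fin n → Rpqm n p q m))
    (g : FreeLieAlgebra ℤ (Fin n)) (d : Fin n → FreeAlgebra ℤ (Fin n))
    (hd : ω n g = ∑ i, FreeAlgebra.ι ℤ i * d i) :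
    (FreeLieAlgebra.lift ℤ (Smat n p q m s τ)) g =
      Matrix.of ![![inl (MvPolynomial.eval₂Hom (Int.castRingHom (Rpqm n p q m)) s (φ' n (ω n g))), 0],
        ![inr (∑ i, MvPolynomial.eval₂Hom (Int.castRingHom (Rpqm n p q m)) s
            (φ' n (d i)) • τ i), 0]] := by
  set ψ := FreeAlgebra.lift ℤ (Smat n p q m s τ)
  have hS : ∀ i, Smat n p q m s τ i 0 1 = 0 := fun _ => rfl
  have hterm : ∀ i, Smat n p q m s τ i * ψ (d i) =
      lowerColumn (s i * FreeAlgebra.lift ℤ s (d i)) (FreeAlgebra.lift ℤ s (d i) • τ i) :=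
    fun i => lowerColumn_mul
      ((freeAlgebra_lift_apply_zero_zero hS (d i)).trans (freeAlgebra_lift_inl s (d i)))
      (freeAlgebra_lift_apply_zero_one hS (d i))
  have hlinear : FreeAlgebra.lift ℤ s (ω n g) = ∑ i, s i * FreeAlgebra.lift ℤ s (d i) := by
    simp [hd]
  calc FreeLieAlgebra.lift ℤ (Smat n p q m s τ) g
      = ψ (ω n g) := freeLieAlgebra_lift_eq_freeAlgebra_lift _ g
    _ = ∑ i, Smat n p q m s τ i * ψ (d i) := by simp [hd, ψ]
    _ = lowerColumn (FreeAlgebra.lift ℤ s (ω n g)) (∑ i, FreeAlgebra.lift ℤ s (d i) • τ i) := by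
      rw [hlinear, ← sum_lowerColumn]
      exact Finset.sum_congr rfl fun i _ => hterm i
    _ = _ := by simp only [eval₂Hom_φ']; rfl

/-- **substitution formula.** For any Lie polynomial `g` and matrices
`Sᵢ = [[sᵢ,0],[τᵢ,0]]` in the metabelian matrix Lie ring `M_{p,q,m}`,
`g(S₁,…,Sₙ) = [[ḡ(s₁,…,sₙ), 0], [∑ᵢ τᵢ·∂̄ᵢg(s₁,…,sₙ), 0]]`, where `ḡ` is the linear part
of `g` and `∂̄ᵢ g` the reduced partial derivatives evaluated at `s₁,…,sₙ`. -/
theorem substitution_formula (n p q m : ℕ) (hp : 0 < p) (hq : 0 < q) (hm : 2 ≤ m)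
    (s : Fin n → Rpqm n p q m) (τ : Fin n → (Fin n → Rpqm n p q m))
    (g : FreeLieAlgebra ℤ (Fin n)) (d : Fin n → FreeAlgebra ℤ (Fin n))
    (hd : ω n g = ∑ i, FreeAlgebra.ι ℤ i * d i) :
    (FreeLieAlgebra.lift ℤ (Smat n p q m s τ)) g =
      Matrix.of ![![inl (MvPolynomial.eval₂Hom (Int.castRingHom (Rpqm n p q m)) s (φ' n (ω n g))), 0],
        ![inr (∑ i, MvPolynomial.eval₂Hom (Int.castRingHom (Rpqm n p q m)) s
            (φ' n (d i)) • τ i), 0]] :=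
  substitution_formula_general n p q m s τ g d hd
end
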